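/- If every vertex of a finite directed graph G on the S nearest neighbors of q induces a strongly connected subgraph NG_{S,q}, then EH(N_{i,q}, N_{j,q}, q, G) ≤ S for all 1 ≤ i,j ≤ S; consequently greedy beam search with any entry point among these S vertices and L ≥ S visits all S nearest neighbors of q. -/

import Mathlib

attribute [local instance] Classical.propDecidable

/-- The state of greedy beam search (Algorithm 1): the set `C` of unexpanded
candidates, the result set `R`, and the set of visited vertices. -/
structure SState (V : Type*) where
  C : Finset V
  R : Finset V
  visited : Finset V

variable {V : Type*} [Fintype V] [DecidableEq V]

/-- `rank dist x = i` means `x` is the `i`-th nearest vertex to the query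
(with respect to the distance-to-query function `dist`), i.e. `F_{x,q} = i`. -/
noncomputable def rank (dist : V → ℝ) (x : V) : ℕ :=
  (Finset.univ.filter fun y => dist y ≤ dist x).card

/-- Keep only the `L` closest (to the query) elements of `R`. -/
noncomputable def truncate (dist : V → ℝ) (L : ℕ) (R : Finset V) : Finset V :=
  R.filter fun x => (R.filter fun y => dist y ≤ dist x).card ≤ L

/-- An element of `C` closest to the query. -/
noncomputable def argmin (dist : V → ℝ) (C : Finset V) (h : C.Nonempty) : V :=
  (C.exists_min_image dist h).choose

/-- Insertion condition of Algorithm 1: `|R| < L` or `δ(v,q) < d_max`. -/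
def insertCond (dist : V → ℝ) (L : ℕ) (R : Finset V) (v : V) : Prop :=
  R.card < L ∨ ∃ x ∈ R, dist v < dist x

/-- Inner loop of Algorithm 1: process the (unvisited) neighbors of the popped
vertex one by one, inserting them into `C` and `R` and truncating `R` to its
`L` closest elements. -/
noncomputable def insertLoop (dist : V → ℝ) (L : ℕ) : List V → SState V → SState V
  | [], s => s
  | v :: vs, s =>
    insertLoop dist L vs <|
      if v ∈ s.visited then s
      else if insertCond dist L s.R v then
        ⟨insert v s.C, truncate dist L (insert v s.R), insert v s.visited⟩
      else ⟨s.C, s.R, insert v s.visited⟩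

/-- Main loop of Algorithm 1 (greedy beam search) with explicit fuel.
At each step the closest unexpanded candidate `u` is popped; the loop breaks if
`δ(u,q) > d_max` (i.e. every element of the nonempty `R` is strictly closer
than `u`), and otherwise expands `u`. -/
noncomputable def gloop (Adj : V → V → Prop) (dist : V → ℝ) (L : ℕ) :
    ℕ → SState V → SState V
  | 0, s => s
  | n + 1, s =>
    if hC : s.C.Nonempty then
      let u := argmin dist s.C hC
      if s.R.Nonempty ∧ ∀ x ∈ s.R, dist x < dist u then s
      else
        gloop Adj dist L n
          (insertLoop dist L ((Finset.univ.filter fun v => Adj u v).toList)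
            ⟨s.C.erase u, s.R, s.visited⟩)
    else s

/-- Greedy beam search on the graph `Adj` with distance-to-query `dist`,
result-list size `L` and entry point `ep`. -/
noncomputable def search (Adj : V → V → Prop) (dist : V → ℝ) (L : ℕ) (ep : V) : SState V :=
  gloop Adj dist L (Fintype.card V + 1) ⟨{ep}, {ep}, {ep}⟩

/-- Adjacency of `NG_{S,q}`, the subgraph of `Adj` induced by the `S` nearest
vertices to the query. -/
def AdjS (Adj : V → V → Prop) (dist : V → ℝ) (S : ℕ) (a b : V) : Prop :=
  Adj a b ∧ rank dist a ≤ S ∧ rank dist b ≤ S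

/-- `p` is a directed path from `u` to `v` in the graph `Adj`. -/
def IsPathFrom (Adj : V → V → Prop) (u v : V) (p : List V) : Prop :=
  p.head? = some u ∧ p.getLast? = some v ∧ p.Chain' Adj

/-- Escape Hardness `EH(u,v,q,G)`: the minimum, over directed paths `p` from
`u` to `v` in `G`, of the maximum rank (w.r.t. distance to the query) of a
vertex on `p`; it is `⊤` (infinity) if `v` is unreachable from `u`. -/
noncomputable def EH (Adj : V → V → Prop) (rk : V → ℕ) (u v : V) : ℕ∞ :=
  sInf {n : ℕ∞ | ∃ p : List V, IsPathFrom Adj u v p ∧ n = ((p.map rk).foldr max 0 : ℕ)}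

/-!
A path inside `NG_{S,q}` only meets vertices of rank at most `S`, which bounds `EH`.

For the search, the invariant is that the result set `R` consists of visited vertices and
has `min L #visited` elements (truncation keeps `min L #R` elements because distances are
distinct), and that every visited vertex of rank at most `S` is either still a candidate or
has all its out-neighbours visited. A vertex rejected by the insertion test is farther than
`L ≥ S` elements of `R`, so its rank exceeds `S`. When the search halts, a near vertex `b`
still among the candidates is farther than all of `R`, so `#R < rank b ≤ S ≤ L`; then
`R = visited ∋ b`, which is absurd. Hence the visited set is closed under the edges of
`NG_{S,q}`, and strong connectivity does the rest.
-/

open Finset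

section Paths

variable {α : Type*}

theorem exists_isPathFrom_of_reflTransGen {Adj r : α → α → Prop} {P : α → Prop}
    (hr : ∀ a b, r a b → Adj a b ∧ P b) {u v : α} (h : Relation.ReflTransGen r u v)
    (hu : P u) : ∃ p, IsPathFrom Adj u v p ∧ ∀ x ∈ p, P x := by
  induction h with
  | refl => exact ⟨[u], ⟨rfl, rfl, List.isChain_singleton u⟩, by simpa using hu⟩
  | @tail b c _ hbc ih =>
    obtain ⟨p, ⟨hhead, hlast, hchain⟩, hP⟩ := ih
    refine ⟨p ++ [c], ⟨?_, List.getLast?_concat, ?_⟩, ?_⟩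
    · cases p with
      | nil => simp at hhead
      | cons x p => simpa using hhead
    · refine List.isChain_append.mpr ⟨hchain, List.isChain_singleton c, fun x hx y hy => ?_⟩
      simp_all
    · simpa [or_imp, forall_and] using ⟨hP, (hr b c hbc).2⟩

theorem EH_le_of_isPathFrom {Adj : α → α → Prop} {rk : α → ℕ} {u v : α} {p : List α}
    {n : ℕ} (hp : IsPathFrom Adj u v p) (hn : ∀ x ∈ p, rk x ≤ n) : EH Adj rk u v ≤ n := by
  refine sInf_le_of_le ⟨p, hp, rfl⟩ ?_
  exact_mod_cast List.max_le_of_forall_le _ _ (by simpa using hn)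

end Paths

section Ordering

variable {α : Type*}

theorem card_lt_rank_of_forall_dist_le [Fintype α] {dist : α → ℝ} {R : Finset α} {b : α}
    (hb : b ∉ R) (h : ∀ x ∈ R, dist x ≤ dist b) : #R < rank dist b := by
  have hsub : insert b R ⊆ univ.filter fun y => dist y ≤ dist b := by
    intro x hx
    rcases mem_insert.mp hx with rfl | hx
    · simp
    · simpa using h x hx
  have hcard := card_le_card hsub
  rw [card_insert_of_notMem hb] at hcard
  exact hcard

theorem truncate_subset (dist : α → ℝ) (L : ℕ) (R : Finset α) : truncate dist L R ⊆ R :=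
  filter_subset _ _

theorem card_filter_dist_le_lt {dist : α → ℝ} {R : Finset α} {x y : α} (hy : y ∈ R)
    (hxy : dist x < dist y) :
    #(R.filter fun z => dist z ≤ dist x) < #(R.filter fun z => dist z ≤ dist y) := by
  refine card_lt_card ((ssubset_iff_of_subset ?_).mpr ⟨y, ?_, ?_⟩)
  · exact fun z hz => mem_filter.mpr ⟨(mem_filter.mp hz).1, (mem_filter.mp hz).2.trans hxy.le⟩
  · simpa using hy
  · simpa [hy] using hxy

theorem min_le_card_truncate {dist : α → ℝ} (hinj : Function.Injective dist) (L : ℕ)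
    (R : Finset α) : min L #R ≤ #(truncate dist L R) := by
  set pos : α → ℕ := fun x => #(R.filter fun y => dist y ≤ dist x)
  have hpos : Set.InjOn pos R := by
    intro x hx y hy hxy
    rcases lt_trichotomy (dist x) (dist y) with hlt | heq | hgt
    · exact absurd hxy (card_filter_dist_le_lt hy hlt).ne
    · exact hinj heq
    · exact absurd hxy (card_filter_dist_le_lt hx hgt).ne'
  have hdropped : #(R.filter fun x => ¬ pos x ≤ L) ≤ #R - L := by
    have := card_le_card_of_injOn (s := R.filter fun x => ¬ pos x ≤ L) (t := Icc (L + 1) #R) pos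
      (fun x hx => mem_Icc.mpr
        ⟨by have := (mem_filter.mp hx).2; omega, card_le_card (filter_subset _ _)⟩)
      (hpos.mono (filter_subset _ _))
    simpa using this
  have hsplit := card_filter_add_card_filter_not (s := R) fun x => pos x ≤ L
  show min L #R ≤ #(R.filter fun x => pos x ≤ L)
  omega

theorem argmin_mem (dist : α → ℝ) (C : Finset α) (h : C.Nonempty) : argmin dist C h ∈ C :=
  (C.exists_min_image dist h).choose_spec.1

theorem argmin_le (dist : α → ℝ) {C : Finset α} (h : C.Nonempty) {c : α} (hc : c ∈ C) :
    dist (argmin dist C h) ≤ dist c :=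
  (C.exists_min_image dist h).choose_spec.2 c hc

end Ordering

section Halting

variable {α : Type*} [Fintype α]

structure BeamInv (Adj : α → α → Prop) (dist : α → ℝ) (L S : ℕ) (pending : List α)
    (s : SState α) : Prop where
  R_subset_visited : s.R ⊆ s.visited
  min_le_card_R : min L #s.visited ≤ #s.R
  near_closed : ∀ a ∈ s.visited, rank dist a ≤ S →
    a ∈ s.C ∨ ∀ w, Adj a w → w ∈ s.visited ∨ w ∈ pending

def Halted (dist : α → ℝ) (s : SState α) : Prop :=
  ∀ c ∈ s.C, ∀ x ∈ s.R, dist x < dist c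

theorem BeamInv.notMem_C_of_halted {Adj : α → α → Prop} {dist : α → ℝ} {L S : ℕ}
    {s : SState α} (h : BeamInv Adj dist L S [] s) (hs : Halted dist s) (hSL : S ≤ L) {b : α}
    (hb : b ∈ s.visited) (hrank : rank dist b ≤ S) : b ∉ s.C := by
  intro hbC
  have hbR : b ∉ s.R := fun hbR => lt_irrefl _ (hs b hbC b hbR)
  have hRlt : #s.R < rank dist b :=
    card_lt_rank_of_forall_dist_le hbR fun x hx => (hs b hbC x hx).le
  have hcard := h.min_le_card_R
  have hRvis : s.R = s.visited := eq_of_subset_of_card_le h.R_subset_visited (by omega)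
  exact hbR (hRvis ▸ hb)

theorem BeamInv.mem_visited_of_adjS {Adj : α → α → Prop} {dist : α → ℝ} {L S : ℕ}
    {s : SState α} (h : BeamInv Adj dist L S [] s) (hs : Halted dist s) (hSL : S ≤ L) {b c : α}
    (hb : b ∈ s.visited) (hbc : AdjS Adj dist S b c) : c ∈ s.visited :=
  (((h.near_closed b hb hbc.2.1).resolve_left
    (h.notMem_C_of_halted hs hSL hb hbc.2.1)) c hbc.1).resolve_right List.not_mem_nil

end Halting

section Insertion

variable {α : Type*} [DecidableEq α]

noncomputable def insertStep (dist : α → ℝ) (L : ℕ) (v : α) (s : SState α) : SState α :=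
  if v ∈ s.visited then s
  else if insertCond dist L s.R v then
    ⟨insert v s.C, truncate dist L (insert v s.R), insert v s.visited⟩
  else ⟨s.C, s.R, insert v s.visited⟩

theorem insertLoop_cons (dist : α → ℝ) (L : ℕ) (v : α) (vs : List α) (s : SState α) :
    insertLoop dist L (v :: vs) s = insertLoop dist L vs (insertStep dist L v s) :=
  rfl

theorem insertStep_visited (dist : α → ℝ) (L : ℕ) (v : α) (s : SState α) :
    (insertStep dist L v s).visited = insert v s.visited := by
  unfold insertStep
  split_ifs with hv
  · exact (insert_eq_of_mem hv).symm
  · rfl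
  · rfl

theorem C_subset_insertStep (dist : α → ℝ) (L : ℕ) (v : α) (s : SState α) :
    s.C ⊆ (insertStep dist L v s).C := by
  unfold insertStep
  split_ifs
  · exact subset_rfl
  · exact subset_insert _ _
  · exact subset_rfl

theorem R_subset_insertStep {dist : α → ℝ} {L : ℕ} {v : α} {s : SState α}
    (hR : s.R ⊆ s.visited) : (insertStep dist L v s).R ⊆ (insertStep dist L v s).visited := by
  rw [insertStep_visited]
  unfold insertStep
  split_ifs
  · exact hR.trans (subset_insert _ _)
  · exact (truncate_subset _ _ _).trans (insert_subset_insert _ hR)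
  · exact hR.trans (subset_insert _ _)

theorem min_le_card_insertStep_R {dist : α → ℝ} (hinj : Function.Injective dist) {L : ℕ}
    {v : α} {s : SState α} (hR : s.R ⊆ s.visited) (hcard : min L #s.visited ≤ #s.R) :
    min L #(insertStep dist L v s).visited ≤ #(insertStep dist L v s).R := by
  rw [insertStep_visited]
  unfold insertStep
  split_ifs with hv hcond
  · rwa [insert_eq_of_mem hv]
  · show min L #(insert v s.visited) ≤ #(truncate dist L (insert v s.R))
    have hvR : v ∉ s.R := fun h => hv (hR h)
    have := min_le_card_truncate hinj L (insert v s.R)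
    rw [card_insert_of_notMem hvR] at this
    rw [card_insert_of_notMem hv]
    omega
  · show min L #(insert v s.visited) ≤ #s.R
    simp only [insertCond, not_or] at hcond
    omega

theorem visited_subset_insertLoop (dist : α → ℝ) (L : ℕ) (l : List α) (s : SState α) :
    s.visited ⊆ (insertLoop dist L l s).visited := by
  induction l generalizing s with
  | nil => exact subset_rfl
  | cons v vs ih =>
    rw [insertLoop_cons]
    exact (insertStep_visited dist L v s ▸ subset_insert v s.visited).trans (ih _)

end Insertion

section Search

variable {α : Type*} [Fintype α] [DecidableEq α]

theorem mem_insertStep_C_of_rank_le {dist : α → ℝ} {L S : ℕ} {v : α} {s : SState α}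
    (hR : s.R ⊆ s.visited) (hSL : S ≤ L) (hv : v ∉ s.visited) (hrank : rank dist v ≤ S) :
    v ∈ (insertStep dist L v s).C := by
  unfold insertStep
  rw [if_neg hv]
  split_ifs with hcond
  · exact mem_insert_self _ _
  · simp only [insertCond, not_or, not_exists, not_and, not_lt] at hcond
    have := card_lt_rank_of_forall_dist_le (fun h => hv (hR h)) hcond.2
    omega

namespace BeamInv

variable {Adj : α → α → Prop} {dist : α → ℝ} {L S : ℕ}

theorem insertStep (hinj : Function.Injective dist) (hSL : S ≤ L) {v : α} {vs : List α}
    {s : SState α} (h : BeamInv Adj dist L S (v :: vs) s) :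
    BeamInv Adj dist L S vs (insertStep dist L v s) := by
  refine ⟨R_subset_insertStep h.R_subset_visited,
    min_le_card_insertStep_R hinj h.R_subset_visited h.min_le_card_R, fun a ha hrank => ?_⟩
  rw [insertStep_visited] at ha ⊢
  by_cases hav : a ∈ s.visited
  · refine (h.near_closed a hav hrank).imp (fun haC => C_subset_insertStep _ _ _ _ haC)
      fun hsucc w hw => ?_
    rcases hsucc w hw with hw | hw
    · exact Or.inl (mem_insert_of_mem hw)
    · rcases List.mem_cons.mp hw with rfl | hw
      · exact Or.inl (mem_insert_self _ _)
      · exact Or.inr hw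
  · obtain rfl : a = v := by simpa [hav] using ha
    exact Or.inl (mem_insertStep_C_of_rank_le h.R_subset_visited hSL hav hrank)

theorem insertLoop (hinj : Function.Injective dist) (hSL : S ≤ L) {l : List α} {s : SState α}
    (h : BeamInv Adj dist L S l s) : BeamInv Adj dist L S [] (insertLoop dist L l s) := by
  induction l generalizing s with
  | nil => exact h
  | cons v vs ih => exact ih (h.insertStep hinj hSL)

theorem expand {s : SState α} (h : BeamInv Adj dist L S [] s) (u : α) :
    BeamInv Adj dist L S (univ.filter fun w => Adj u w).toList
      ⟨s.C.erase u, s.R, s.visited⟩ := by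
  refine ⟨h.R_subset_visited, h.min_le_card_R, fun a ha hrank => ?_⟩
  by_cases hau : a = u
  · subst hau
    exact Or.inr fun w hw => Or.inr (by simpa using hw)
  · rcases h.near_closed a ha hrank with haC | hsucc
    · exact Or.inl (mem_erase.mpr ⟨hau, haC⟩)
    · exact Or.inr fun w hw => Or.inl (by simpa using hsucc w hw)

theorem gloop (hinj : Function.Injective dist) (hSL : S ≤ L) (n : ℕ) {s : SState α}
    (h : BeamInv Adj dist L S [] s) : BeamInv Adj dist L S [] (gloop Adj dist L n s) := by
  induction n generalizing s with
  | zero => exact h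
  | succ n ih =>
    dsimp only [_root_.gloop]
    split_ifs
    · exact h
    · exact ih ((h.expand _).insertLoop hinj hSL)
    · exact h

end BeamInv

theorem visited_subset_gloop (Adj : α → α → Prop) (dist : α → ℝ) (L n : ℕ)
    (s : SState α) :
    s.visited ⊆ (gloop Adj dist L n s).visited := by
  induction n generalizing s with
  | zero => exact subset_rfl
  | succ n ih =>
    dsimp only [gloop]
    split_ifs
    · exact subset_rfl
    · exact fun x hx => ih _ (visited_subset_insertLoop _ _ _ _ hx)
    · exact subset_rfl

noncomputable def SState.potential (s : SState α) : ℕ := #s.visitedᶜ + #s.C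

theorem potential_insertStep_le (dist : α → ℝ) (L : ℕ) (v : α) (s : SState α) :
    (insertStep dist L v s).potential ≤ s.potential := by
  unfold insertStep SState.potential
  split_ifs with hv
  · exact le_rfl
  all_goals
    have hcompl := card_erase_add_one (mem_compl.mpr hv)
    rw [← compl_insert] at hcompl
    have := card_insert_le v s.C
    dsimp only
    omega

theorem potential_insertLoop_le (dist : α → ℝ) (L : ℕ) (l : List α) (s : SState α) :
    (insertLoop dist L l s).potential ≤ s.potential := by
  induction l generalizing s with
  | nil => exact le_rfl
  | cons v vs ih => exact (ih _).trans (potential_insertStep_le dist L v s)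

theorem halted_gloop (Adj : α → α → Prop) (dist : α → ℝ) (L n : ℕ) {s : SState α}
    (hs : s.potential < n) : Halted dist (gloop Adj dist L n s) := by
  induction n generalizing s with
  | zero => exact absurd hs (Nat.not_lt_zero _)
  | succ n ih =>
    dsimp only [gloop]
    split_ifs with hC hbreak
    · exact fun c hc x hx => (hbreak.2 x hx).trans_le (argmin_le dist hC hc)
    · apply ih
      refine (potential_insertLoop_le _ _ _ _).trans_lt ?_
      have := card_erase_lt_of_mem (argmin_mem dist s.C hC)
      unfold SState.potential at hs ⊢
      dsimp only
      omega
    · exact fun c hc => absurd ⟨c, hc⟩ hC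

theorem mem_visited_search_of_reflTransGen {Adj : α → α → Prop} {dist : α → ℝ}
    (hinj : Function.Injective dist) {L S : ℕ} (hSL : S ≤ L) {e v : α}
    (h : Relation.ReflTransGen (AdjS Adj dist S) e v) : v ∈ (search Adj dist L e).visited := by
  let s₀ : SState α := ⟨{e}, {e}, {e}⟩
  have hinit : BeamInv Adj dist L S [] s₀ :=
    ⟨subset_rfl, by simp [s₀], fun a ha _ => Or.inl ha⟩
  have hinv : BeamInv Adj dist L S [] (search Adj dist L e) := hinit.gloop hinj hSL _
  have hhalt : Halted dist (search Adj dist L e) := by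
    refine halted_gloop _ _ _ _ ?_
    have : 0 < Fintype.card α := Fintype.card_pos_iff.mpr ⟨e⟩
    simp only [SState.potential, card_compl, card_singleton]
    omega
  induction h with
  | refl => exact visited_subset_gloop _ _ _ _ s₀ (mem_singleton_self e)
  | tail _ hbc ih => exact hinv.mem_visited_of_adjS hhalt hSL ih hbc

end Search

/-- If the subgraph `NG_{S,q}` induced by the `S` nearest
neighbors of `q` is strongly connected, then `EH(N_{i,q}, N_{j,q}, q, G) ≤ S`
for all `1 ≤ i, j ≤ S`; consequently greedy beam search with any entry point
among these `S` vertices and `L ≥ S` visits all `S` nearest neighbors of `q`. -/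
theorem strongly_connected_NG_EH_and_visits
    (Adj : V → V → Prop) (dist : V → ℝ) (hinj : Function.Injective dist)
    (S : ℕ)
    (hSC : ∀ u v : V, rank dist u ≤ S → rank dist v ≤ S →
      Relation.ReflTransGen (AdjS Adj dist S) u v) :
    (∀ u v : V, rank dist u ≤ S → rank dist v ≤ S →
        EH Adj (rank dist) u v ≤ (S : ℕ∞)) ∧
      (∀ L : ℕ, S ≤ L → ∀ e : V, rank dist e ≤ S → ∀ v : V, rank dist v ≤ S →
        v ∈ (search Adj dist L e).visited) := by
  refine ⟨fun u v hu hv => ?_, fun L hSL e he v hv =>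
    mem_visited_search_of_reflTransGen hinj hSL (hSC e v he hv)⟩
  obtain ⟨p, hp, hrank⟩ :=
    exists_isPathFrom_of_reflTransGen (fun _ _ hab => ⟨hab.1, hab.2.2⟩) (hSC u v hu hv) hu
  exact EH_le_of_isPathFrom hp hrank
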